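/- Let G be a finite simple graph on n vertices. There exists a bijection σ : {0,1,…,n−1} → V(G) such that (a) every connected component of G is an interval under σ (i.e., for all indices x < y < z, if σ(x) and σ(z) lie in the same connected component C, then σ(y) ∈ C), and (b) whenever σ(i) and σ(i+1) lie in the same connected component, σ(i) is adjacent to σ(i+1), if and only if every connected component of G contains a Hamiltonian path of that component. -/

import Mathlib

/-!
If every component occupies a block of consecutive positions in which neighbouring vertices are
adjacent, reading off a block gives a Hamiltonian path of that component. Conversely,
concatenating Hamiltonian paths of the components, taken in any fixed order of the components,
gives such an ordering: the blocks are intervals by construction, and two consecutive vertices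
from different blocks lie in different components, so nothing is required of them.
-/

theorem exists_fiber_eq_Icc {α β : Type*} [LinearOrder α] [Fintype α] {f : α → β}
    (hf : ∀ x y z, x < y → y < z → f x = f z → f y = f x) {c : β}
    (hc : c ∈ Set.range f) :
    ∃ a b, ∀ i, f i = c ↔ a ≤ i ∧ i ≤ b := by
  classical
  set S := Finset.univ.filter (f · = c)
  have hS : S.Nonempty := by simpa [S, Finset.Nonempty] using hc
  have ha : f (S.min' hS) = c := (Finset.mem_filter.1 (S.min'_mem hS)).2
  have hb : f (S.max' hS) = c := (Finset.mem_filter.1 (S.max'_mem hS)).2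
  refine ⟨S.min' hS, S.max' hS, fun i => ⟨fun hi => ?_, fun ⟨hai, hib⟩ => ?_⟩⟩
  · have hiS : i ∈ S := by simpa [S] using hi
    exact ⟨S.min'_le i hiS, S.le_max' i hiS⟩
  rcases hai.eq_or_lt with rfl | hai
  · exact ha
  rcases hib.eq_or_lt with rfl | hib
  · exact hb
  rw [hf _ _ _ hai hib (ha.trans hb.symm), ha]

section Fibers

variable {V C : Type*} {n : ℕ} {κ : V → C} {R : V → V → Prop}

theorem exists_nodup_isChain_fiber {σ : Fin n ≃ V}
    (hconv : ∀ x y z : Fin n, x < y → y < z → κ (σ x) = κ (σ z) → κ (σ y) = κ (σ x))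
    (hchain : (List.ofFn σ).IsChain fun x y => κ x = κ y → R x y) {c : C}
    (hc : c ∈ Set.range κ) :
    ∃ l : List V, l.Nodup ∧ l.IsChain R ∧ ∀ w, w ∈ l ↔ κ w = c := by
  obtain ⟨a, b, hab⟩ := exists_fiber_eq_Icc (f := κ ∘ σ) hconv
    (by rwa [Set.range_comp, σ.range_eq_univ, Set.image_univ])
  obtain ⟨v, hv⟩ := hc
  have hle : (a : ℕ) ≤ b := by
    obtain ⟨h1, h2⟩ := (hab (σ.symm v)).1 (by simpa using hv)
    exact h1.trans h2
  have hmem : ∀ i : Fin n, κ (σ i) = c ↔ (a : ℕ) ≤ i ∧ (i : ℕ) ≤ b := hab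
  refine ⟨List.ofFn fun j : Fin (b - a + 1) => σ ⟨a + j, by omega⟩, ?_, ?_, fun w => ?_⟩
  · refine List.nodup_ofFn.2 fun j j' h => ?_
    simpa [Fin.ext_iff] using σ.injective h
  · refine List.isChain_ofFn.2 fun j hj => List.isChain_ofFn.1 hchain (a + j) (by omega) ?_
    rw [(hmem _).2 (by dsimp only; omega), (hmem _).2 (by dsimp only; omega)]
  · rw [List.mem_ofFn]
    constructor
    · rintro ⟨j, rfl⟩
      exact (hmem _).2 (by dsimp only; omega)
    · intro hw
      have hi := (hmem (σ.symm w)).1 (by simpa using hw)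
      exact ⟨⟨σ.symm w - a, by omega⟩, by simp [Nat.add_sub_cancel' hi.1]⟩

theorem isChain_flatMap_of_fibers {blk : C → List V} (hmem : ∀ c w, w ∈ blk c ↔ κ w = c)
    (hchain : ∀ c, (blk c).IsChain R) {cs : List C} (hcs : cs.Nodup) :
    (cs.flatMap blk).IsChain fun x y => κ x = κ y → R x y := by
  induction cs with
  | nil => simp
  | cons c cs ih =>
    rw [List.nodup_cons] at hcs
    rw [List.flatMap_cons]
    refine List.IsChain.append ((hchain c).imp fun _ _ h _ => h) (ih hcs.2) fun x hx y hy hxy => ?_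
    obtain ⟨d, hd, hy⟩ := List.mem_flatMap.1 (List.mem_of_mem_head? hy)
    rw [(hmem c x).1 (List.mem_of_mem_getLast? hx), (hmem d y).1 hy] at hxy
    exact absurd (hxy ▸ hd) hcs.1

theorem List.Nodup.exists_equiv_ofFn_eq [Fintype V] {L : List V} (hnd : L.Nodup)
    (hmem : ∀ v, v ∈ L) (hn : Fintype.card V = n) : ∃ σ : Fin n ≃ V, List.ofFn σ = L := by
  classical
  let e := hnd.getEquivOfForallMemList L hmem
  obtain rfl : L.length = n := by rw [← hn, ← Fintype.card_congr e, Fintype.card_fin]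
  exact ⟨e, List.ofFn_getElem⟩

theorem exists_ordering_of_fibers [Fintype V] [Fintype C] (hn : Fintype.card V = n)
    {blk : C → List V} (hnodup : ∀ c, (blk c).Nodup) (hchain : ∀ c, (blk c).IsChain R)
    (hmem : ∀ c w, w ∈ blk c ↔ κ w = c) :
    ∃ σ : Fin n ≃ V,
      (∀ x y z : Fin n, x < y → y < z → κ (σ x) = κ (σ z) → κ (σ y) = κ (σ x)) ∧
      (List.ofFn σ).IsChain fun x y => κ x = κ y → R x y := by
  let e := Fintype.equivFin C
  have hcs : (List.ofFn e.symm).Nodup := List.nodup_ofFn.2 e.symm.injective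
  set L := (List.ofFn e.symm).flatMap blk
  have hL_nodup : L.Nodup := by
    refine List.nodup_flatMap.2 ⟨fun c _ => hnodup c, List.pairwise_ofFn.2 fun i j hij => ?_⟩
    refine List.disjoint_left.2 fun w hwi hwj => hij.ne ?_
    rw [← e.apply_symm_apply i, ← e.apply_symm_apply j, ← (hmem _ w).1 hwi,
      ← (hmem _ w).1 hwj]
  have hL_mem : ∀ w, w ∈ L := fun w =>
    List.mem_flatMap.2 ⟨κ w, List.mem_ofFn.2 ⟨e (κ w), by simp⟩, (hmem _ _).2 rfl⟩
  have hL_sorted : L.Pairwise fun x y => e (κ x) ≤ e (κ y) := by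
    refine List.pairwise_flatMap.2 ⟨fun c _ => ?_, List.pairwise_ofFn.2 fun i j hij => ?_⟩
    · exact List.pairwise_of_forall_mem_list fun x hx y hy => by
        rw [(hmem c x).1 hx, (hmem c y).1 hy]
    · intro x hx y hy
      rw [(hmem _ x).1 hx, (hmem _ y).1 hy, e.apply_symm_apply, e.apply_symm_apply]
      exact hij.le
  obtain ⟨σ, hσ⟩ := hL_nodup.exists_equiv_ofFn_eq hL_mem hn
  refine ⟨σ, fun x y z hxy hyz hxz => e.injective ?_,
    hσ ▸ isChain_flatMap_of_fibers hmem hchain hcs⟩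
  have hmono := List.pairwise_ofFn.1 (hσ ▸ hL_sorted)
  exact le_antisymm (hxz ▸ hmono hyz) (hmono hxy)

end Fibers

theorem SimpleGraph.exists_isPath_support_eq {V : Type*} {G : SimpleGraph V} {l : List V}
    (hne : l ≠ []) (hnodup : l.Nodup) (hchain : l.IsChain G.Adj) :
    ∃ (u v : V) (p : G.Walk u v), p.IsPath ∧ p.support = l :=
  ⟨_, _, .ofSupport l hne hchain, .mk' ((Walk.support_ofSupport hne hchain).symm ▸ hnodup),
    Walk.support_ofSupport hne hchain⟩

/-- Let `G` be a finite simple graph on `n` vertices. There exists a bijection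
`σ : Fin n ≃ V` such that (a) every connected component of `G` is an interval under
`σ`, and (b) whenever `σ i` and `σ (i+1)` lie in the same connected component they are
adjacent, if and only if every connected component of `G` contains a Hamiltonian path
of that component (a path of `G` whose support is exactly the vertex set of the
component, visiting each vertex once). -/
theorem stmt_2 {V : Type*} [Fintype V] (G : SimpleGraph V)
    (n : ℕ) (hcard : Fintype.card V = n) :
    (∃ σ : Fin n ≃ V,
        (∀ x y z : Fin n, x < y → y < z →
          G.connectedComponentMk (σ x) = G.connectedComponentMk (σ z) →
          G.connectedComponentMk (σ y) = G.connectedComponentMk (σ x)) ∧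
        (∀ (i : ℕ) (h : i + 1 < n),
          G.connectedComponentMk (σ ⟨i, by omega⟩) =
              G.connectedComponentMk (σ ⟨i + 1, h⟩) →
            G.Adj (σ ⟨i, by omega⟩) (σ ⟨i + 1, h⟩))) ↔
      (∀ c : G.ConnectedComponent, ∃ (u v : V) (p : G.Walk u v),
        p.IsPath ∧ ∀ w : V, w ∈ p.support ↔ G.connectedComponentMk w = c) := by
  constructor
  · rintro ⟨σ, hconv, hadj⟩ c
    obtain ⟨l, hnodup, hchain, hmem⟩ :=
      exists_nodup_isChain_fiber hconv (List.isChain_ofFn.2 hadj) c.exists_rep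
    obtain ⟨v, hv⟩ := c.exists_rep
    obtain ⟨u, w, p, hp, rfl⟩ :=
      G.exists_isPath_support_eq (List.ne_nil_of_mem ((hmem v).2 hv)) hnodup hchain
    exact ⟨u, w, p, hp, hmem⟩
  · intro h
    choose u v p hpath hsupp using h
    obtain ⟨σ, hconv, hchain⟩ :=
      exists_ordering_of_fibers hcard (fun c => (hpath c).support_nodup)
        (fun c => (p c).isChain_adj_support) hsupp
    exact ⟨σ, hconv, List.isChain_ofFn.1 hchain⟩
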